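/- Let p be a prime with p ≡ 1 (mod 5), set t = (p−1)/5, and let T be a generator of the group of characters on 𝔽_p. Then Σ_{i=0}^{4} Σ_{j=0}^{4} Σ_{k=0}^{4} G_{(i+j+k)t} · G_{−it} · G_{−jt} · G_{−kt} = 1 + 36p^2 + 24p + 12p · Σ_{k=1}^{4} J(T^{kt}, T^{2kt}, T^{2kt}) + 4p · Σ_{k=1}^{4} J(T^{kt}, T^{kt}, T^{kt}). -/
import Mathlib

open Finset

/-- The standard additive character `θ(a) = e^{2πia/p}` on `𝔽_p`. -/
noncomputable def theta (p : ℕ) (a : ZMod p) : ℂ :=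
  Complex.exp (2 * Real.pi * Complex.I * (ZMod.val a : ℂ) / (p : ℂ))

/-- The Gauss sum `G(χ) = ∑_{x ∈ 𝔽_p} χ(x) θ(x)`. -/
noncomputable def gaussS (p : ℕ) [NeZero p] (χ : MulChar (ZMod p) ℂ) : ℂ :=
  ∑ x : ZMod p, χ x * theta p x

/-- The generalized Jacobi sum `J(χ₁,χ₂,χ₃) = ∑_{t₁+t₂+t₃=1} χ₁(t₁)χ₂(t₂)χ₃(t₃)`. -/
noncomputable def jacobi3 (p : ℕ) [NeZero p] (χ₁ χ₂ χ₃ : MulChar (ZMod p) ℂ) : ℂ :=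
  ∑ v ∈ Finset.univ.filter (fun v : ZMod p × ZMod p × ZMod p => v.1 + v.2.1 + v.2.2 = 1),
    χ₁ v.1 * χ₂ v.2.1 * χ₃ v.2.2

lemma theta_eq (p : ℕ) [NeZero p] (a : ZMod p) : theta p a = ZMod.stdAddChar a := by
  rw [ZMod.stdAddChar_apply, ZMod.toCircle_apply, theta]

lemma gaussS_eq (p : ℕ) [NeZero p] (χ : MulChar (ZMod p) ℂ) :
    gaussS p χ = gaussSum χ ZMod.stdAddChar := by
  unfold gaussS gaussSum
  simp only [theta_eq]

lemma gaussS_one (p : ℕ) [Fact p.Prime] : gaussS p (1 : MulChar (ZMod p) ℂ) = -1 := by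
  have hp1 : (1 : ZMod p) ≠ 0 := one_ne_zero
  have hne : (ZMod.stdAddChar : AddChar (ZMod p) ℂ) ≠ 1 := by
    intro h
    have := ZMod.isPrimitive_stdAddChar p hp1
    rw [AddChar.mulShift_one] at this
    exact this h
  have hsum : ∑ x : ZMod p, ZMod.stdAddChar x = 0 := AddChar.sum_eq_zero_of_ne_one hne
  rw [gaussS_eq]
  unfold gaussSum
  have : ∀ x : ZMod p, (1 : MulChar (ZMod p) ℂ) x * ZMod.stdAddChar x
      = ZMod.stdAddChar x - (if x = 0 then 1 else 0) := by
    intro x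
    rcases eq_or_ne x 0 with h | h
    · simp [h, MulChar.map_nonunit, MulChar.map_zero]
    · rw [MulChar.one_apply (isUnit_iff_ne_zero.mpr h), if_neg h, one_mul, sub_zero]
  rw [Finset.sum_congr rfl fun x _ => this x, Finset.sum_sub_distrib, hsum,
    Finset.sum_ite_eq' Finset.univ (0 : ZMod p)]
  simp

/-- scaling lemma -/
lemma sum_mulchar_shift {p : ℕ} [Fact p.Prime] (χ₁ χ₂ : MulChar (ZMod p) ℂ)
    (h : χ₁ * χ₂ ≠ 1) (s : ZMod p) :
    ∑ x : ZMod p, χ₁ x * χ₂ (s - x) = (χ₁ * χ₂) s * jacobiSum χ₁ χ₂ := by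
  rcases eq_or_ne s 0 with hs | hs
  · rw [hs, MulChar.map_zero, zero_mul]
    have : ∀ x : ZMod p, χ₁ x * χ₂ (0 - x) = χ₂ (-1) * ((χ₁ * χ₂) x) := by
      intro x
      rw [zero_sub, show -x = -1 * x by ring, map_mul, MulChar.mul_apply]
      ring
    rw [Finset.sum_congr rfl fun x _ => this x, ← Finset.mul_sum,
      MulChar.sum_eq_zero_of_ne_one h, mul_zero]
  · have := Equiv.sum_comp (Equiv.mulLeft₀ s hs) (fun x => χ₁ x * χ₂ (s - x))
    rw [← this]
    have : ∀ y : ZMod p, χ₁ (s * y) * χ₂ (s - s * y) = (χ₁ * χ₂) s * (χ₁ y * χ₂ (1 - y)) := by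
      intro y
      rw [show s - s * y = s * (1 - y) by ring, map_mul, map_mul, MulChar.mul_apply]
      ring
    simp only [Equiv.mulLeft₀_apply]
    rw [Finset.sum_congr rfl fun y _ => this y, ← Finset.mul_sum, jacobiSum]

lemma jacobi3_decomp {p : ℕ} [Fact p.Prime] (χ₁ χ₂ χ₃ : MulChar (ZMod p) ℂ)
    (h : χ₁ * χ₂ ≠ 1) :
    jacobi3 p χ₁ χ₂ χ₃ = jacobiSum χ₃ (χ₁ * χ₂) * jacobiSum χ₁ χ₂ := by
  have step1 : jacobi3 p χ₁ χ₂ χ₃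
      = ∑ w : ZMod p × ZMod p, χ₁ w.1 * χ₂ (1 - w.2 - w.1) * χ₃ w.2 := by
    rw [jacobi3]
    refine Finset.sum_bij' (fun v _ => (v.1, v.2.2)) (fun w _ => (w.1, 1 - w.2 - w.1, w.2))
      ?_ ?_ ?_ ?_ ?_
    · intro a _; exact Finset.mem_univ _
    · intro w _
      simp only [Finset.mem_filter, Finset.mem_univ, true_and]
      ring
    · intro v hv
      simp only [Finset.mem_filter, Finset.mem_univ, true_and] at hv
      have h2 : (1 : ZMod p) - v.2.2 - v.1 = v.2.1 := by linear_combination -hv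
      exact Prod.ext rfl (Prod.ext h2 rfl)
    · intro w _; rfl
    · intro v hv
      simp only [Finset.mem_filter, Finset.mem_univ, true_and] at hv
      have h2 : v.2.1 = (1 : ZMod p) - v.2.2 - v.1 := by linear_combination hv
      rw [← h2]
  rw [step1, Fintype.sum_prod_type_right]
  have key : ∀ b : ZMod p, (∑ a : ZMod p, χ₁ a * χ₂ (1 - b - a) * χ₃ b)
      = (χ₃ b * (χ₁ * χ₂) (1 - b)) * jacobiSum χ₁ χ₂ := by
    intro b
    rw [← Finset.sum_mul, sum_mulchar_shift χ₁ χ₂ h (1 - b)]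
    ring
  rw [Finset.sum_congr rfl fun b _ => key b, ← Finset.sum_mul]
  rfl


set_option linter.unusedSectionVars false

section ChiLemmas

variable {p : ℕ} [Fact p.Prime] {χ : MulChar (ZMod p) ℂ}

lemma chi_pow5 (hord : orderOf χ = 5) : χ ^ 5 = 1 := by
  rw [← hord]; exact pow_orderOf_eq_one χ

lemma chi_dvd_one (hord : orderOf χ = 5) {n : ℕ} (hn : 5 ∣ n) : χ ^ n = 1 := by
  obtain ⟨k, rfl⟩ := hn
  rw [pow_mul, chi_pow5 hord, one_pow]

lemma chi_mod (hord : orderOf χ = 5) (n : ℕ) : χ ^ n = χ ^ (n % 5) := by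
  conv_lhs => rw [← Nat.div_add_mod n 5]
  rw [pow_add, pow_mul, chi_pow5 hord, one_pow, one_mul]

lemma chi_ne_one (hord : orderOf χ = 5) {a : ℕ} (ha : a % 5 ≠ 0) : χ ^ a ≠ 1 := by
  intro h
  have := orderOf_dvd_of_pow_eq_one h
  rw [hord] at this
  omega

lemma chi_inv_pow (hord : orderOf χ = 5) {a b : ℕ} (hab : (a + b) % 5 = 0) :
    (χ ^ a)⁻¹ = χ ^ b := by
  exact (eq_inv_of_mul_eq_one_left (by
    rw [← pow_add]; exact chi_dvd_one hord (by omega))).symm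

lemma chi_neg_one (hord : orderOf χ = 5) (a : ℕ) : (χ ^ a) (-1) = 1 := by
  set x := (χ ^ a) (-1) with hx
  have h2 : x * x = 1 := by
    rw [hx, ← map_mul, show ((-1 : ZMod p) * -1) = 1 by ring, map_one]
  have h5 : x ^ 5 = 1 := by
    have : ((χ ^ a) ^ 5) (-1) = 1 := by
      rw [show (χ ^ a) ^ 5 = (χ ^ 5) ^ a by rw [← pow_mul, ← pow_mul, mul_comm],
        chi_pow5 hord, one_pow, MulChar.one_apply (isUnit_one.neg)]
    rw [← this, MulChar.pow_apply' _ (by norm_num)]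
  linear_combination h5 - (x ^ 3 + x) * h2

end ChiLemmas

section GaussLemmas

variable {p : ℕ} [Fact p.Prime] {χ : MulChar (ZMod p) ℂ}

lemma pairGaussL (hord : orderOf χ = 5) {a b : ℕ} (ha : a % 5 ≠ 0) (hab : (a + b) % 5 = 0) :
    gaussS p (χ ^ a) * gaussS p (χ ^ b) = (p : ℂ) := by
  have hinv : (χ ^ a)⁻¹ = χ ^ b := chi_inv_pow hord hab
  have h1 : gaussSum (χ ^ a) ZMod.stdAddChar * gaussSum (χ ^ a)⁻¹ (ZMod.stdAddChar)⁻¹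
      = (p : ℂ) := by
    rw [gaussSum_mul_gaussSum_eq_card (chi_ne_one hord ha) (ZMod.isPrimitive_stdAddChar p)]
    rw [ZMod.card]
  have h2 : ((χ ^ a)⁻¹) (-1) * gaussSum (χ ^ a)⁻¹ (ZMod.stdAddChar)⁻¹
      = gaussSum (χ ^ a)⁻¹ ZMod.stdAddChar := mul_gaussSum_inv_eq_gaussSum _ _
  have h3 : ((χ ^ a)⁻¹) (-1) = 1 := by rw [hinv, chi_neg_one hord]
  rw [h3, one_mul] at h2
  rw [gaussS_eq, gaussS_eq, ← hinv, ← h2, h1]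

lemma mulGaussL (hord : orderOf χ = 5) {a b : ℕ} (hab : (a + b) % 5 ≠ 0) :
    gaussS p (χ ^ a) * gaussS p (χ ^ b)
      = jacobiSum (χ ^ a) (χ ^ b) * gaussS p (χ ^ ((a + b) % 5)) := by
  have hne : χ ^ a * χ ^ b ≠ 1 := by
    rw [← pow_add, chi_mod hord]
    exact chi_ne_one hord (by omega)
  have := jacobiSum_mul_nontrivial hne ZMod.stdAddChar
  rw [gaussS_eq, gaussS_eq, ← this, gaussS_eq, ← pow_add, chi_mod hord (a + b)]
  ring

lemma jinvL (hord : orderOf χ = 5) {a b : ℕ} (ha : a % 5 ≠ 0) (hab : (a + b) % 5 = 0) :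
    jacobiSum (χ ^ a) (χ ^ b) = -1 := by
  rw [← chi_inv_pow hord hab, jacobiSum_nontrivial_inv (chi_ne_one hord ha),
    chi_neg_one hord]

lemma r2L (hord : orderOf χ = 5) {a b c : ℕ} (ha : a % 5 ≠ 0) (hb : b % 5 ≠ 0)
    (hc : c % 5 ≠ 0) (habc : (a + b + c) % 5 = 0) :
    jacobiSum (χ ^ a) (χ ^ b) = jacobiSum (χ ^ a) (χ ^ c) := by
  have hp0 : (p : ℂ) ≠ 0 := Nat.cast_ne_zero.mpr (Fact.out : p.Prime).ne_zero
  have hdne : (a + b) % 5 ≠ 0 := by omega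
  have hene : (a + c) % 5 ≠ 0 := by omega
  have Bd := mulGaussL hord hdne
  have Be := mulGaussL hord hene
  have Pd := pairGaussL hord (a := (a + b) % 5) (b := c) (by omega) (by omega)
  have Pe := pairGaussL hord (a := (a + c) % 5) (b := b) (by omega) (by omega)
  apply mul_right_cancel₀ hp0
  linear_combination gaussS p (χ ^ b) * Be - gaussS p (χ ^ c) * Bd
    - jacobiSum (χ ^ a) (χ ^ b) * Pd + jacobiSum (χ ^ a) (χ ^ c) * Pe

lemma conjL (hord : orderOf χ = 5) {a b a' b' : ℕ} (ha : a % 5 ≠ 0) (hb : b % 5 ≠ 0)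
    (hab : (a + b) % 5 ≠ 0) (ha' : (a + a') % 5 = 0) (hb' : (b + b') % 5 = 0) :
    jacobiSum (χ ^ a) (χ ^ b) * jacobiSum (χ ^ a') (χ ^ b') = (p : ℂ) := by
  have hne : ringChar ℂ ≠ ringChar (ZMod p) := by
    rw [ringChar.eq_zero, ZMod.ringChar_zmod_n]
    exact fun h => (Fact.out : p.Prime).ne_zero h.symm
  have hmul : χ ^ a * χ ^ b ≠ 1 := by
    rw [← pow_add, chi_mod hord]
    exact chi_ne_one hord (by omega)
  have := jacobiSum_mul_jacobiSum_inv hne (chi_ne_one hord ha) (chi_ne_one hord hb) hmul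
  rw [chi_inv_pow hord ha', chi_inv_pow hord hb', ZMod.card] at this
  exact this

end GaussLemmas
set_option maxHeartbeats 4000000 in
theorem gauss_aux (p : ℕ) [Fact p.Prime] (χ : MulChar (ZMod p) ℂ) (hord : orderOf χ = 5) :
    ∑ i ∈ Finset.range 5, ∑ j ∈ Finset.range 5, ∑ k ∈ Finset.range 5,
      gaussS p (χ ^ ((i + j + k) % 5)) * gaussS p (χ ^ ((5 - i % 5) % 5)) *
        gaussS p (χ ^ ((5 - j % 5) % 5)) * gaussS p (χ ^ ((5 - k % 5) % 5)) =
    1 + 36 * (p : ℂ) ^ 2 + 24 * (p : ℂ) +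
      12 * (p : ℂ) * (∑ k ∈ Finset.Icc (1 : ℕ) 4,
        jacobi3 p (χ ^ (k % 5)) (χ ^ (2 * k % 5)) (χ ^ (2 * k % 5))) +
      4 * (p : ℂ) * ∑ k ∈ Finset.Icc (1 : ℕ) 4,
        jacobi3 p (χ ^ (k % 5)) (χ ^ (k % 5)) (χ ^ (k % 5)) := by
  have hB0 : gaussS p (χ ^ 0) = -1 := by rw [pow_zero]; exact gaussS_one p
  have hP14 : gaussS p (χ ^ 1) * gaussS p (χ ^ 4) = (p : ℂ) :=
    pairGaussL hord (by norm_num) (by norm_num)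
  have hP41 : gaussS p (χ ^ 4) * gaussS p (χ ^ 1) = (p : ℂ) :=
    pairGaussL hord (by norm_num) (by norm_num)
  have hP23 : gaussS p (χ ^ 2) * gaussS p (χ ^ 3) = (p : ℂ) :=
    pairGaussL hord (by norm_num) (by norm_num)
  have hP32 : gaussS p (χ ^ 3) * gaussS p (χ ^ 2) = (p : ℂ) :=
    pairGaussL hord (by norm_num) (by norm_num)
  have hJeq13 : jacobiSum (χ ^ 1) (χ ^ 3) = jacobiSum (χ ^ 1) (χ ^ 1) :=
    (r2L hord (by norm_num) (by norm_num) (by norm_num) (by norm_num)).symm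
  have hJeq31 : jacobiSum (χ ^ 3) (χ ^ 1) = jacobiSum (χ ^ 1) (χ ^ 1) := by
    rw [jacobiSum_comm]; exact hJeq13
  have hJeq21 : jacobiSum (χ ^ 2) (χ ^ 1) = jacobiSum (χ ^ 2) (χ ^ 2) :=
    (r2L hord (by norm_num) (by norm_num) (by norm_num) (by norm_num)).symm
  have hJeq12 : jacobiSum (χ ^ 1) (χ ^ 2) = jacobiSum (χ ^ 2) (χ ^ 2) := by
    rw [jacobiSum_comm]; exact hJeq21
  have hJeq34 : jacobiSum (χ ^ 3) (χ ^ 4) = jacobiSum (χ ^ 3) (χ ^ 3) :=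
    (r2L hord (by norm_num) (by norm_num) (by norm_num) (by norm_num)).symm
  have hJeq43 : jacobiSum (χ ^ 4) (χ ^ 3) = jacobiSum (χ ^ 3) (χ ^ 3) := by
    rw [jacobiSum_comm]; exact hJeq34
  have hJeq42 : jacobiSum (χ ^ 4) (χ ^ 2) = jacobiSum (χ ^ 4) (χ ^ 4) :=
    (r2L hord (by norm_num) (by norm_num) (by norm_num) (by norm_num)).symm
  have hJeq24 : jacobiSum (χ ^ 2) (χ ^ 4) = jacobiSum (χ ^ 4) (χ ^ 4) := by
    rw [jacobiSum_comm]; exact hJeq42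
  have hM11 : gaussS p (χ ^ 1) * gaussS p (χ ^ 1) = jacobiSum (χ ^ 1) (χ ^ 1) * gaussS p (χ ^ 2) :=
    mulGaussL hord (by norm_num)
  have hM12 : gaussS p (χ ^ 1) * gaussS p (χ ^ 2) = jacobiSum (χ ^ 2) (χ ^ 2) * gaussS p (χ ^ 3) := by
    rw [mulGaussL hord (by norm_num), hJeq12]
  have hM13 : gaussS p (χ ^ 1) * gaussS p (χ ^ 3) = jacobiSum (χ ^ 1) (χ ^ 1) * gaussS p (χ ^ 4) := by
    rw [mulGaussL hord (by norm_num), hJeq13]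
  have hM21 : gaussS p (χ ^ 2) * gaussS p (χ ^ 1) = jacobiSum (χ ^ 2) (χ ^ 2) * gaussS p (χ ^ 3) := by
    rw [mulGaussL hord (by norm_num), hJeq21]
  have hM22 : gaussS p (χ ^ 2) * gaussS p (χ ^ 2) = jacobiSum (χ ^ 2) (χ ^ 2) * gaussS p (χ ^ 4) :=
    mulGaussL hord (by norm_num)
  have hM24 : gaussS p (χ ^ 2) * gaussS p (χ ^ 4) = jacobiSum (χ ^ 4) (χ ^ 4) * gaussS p (χ ^ 1) := by
    rw [mulGaussL hord (by norm_num), hJeq24]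
  have hM31 : gaussS p (χ ^ 3) * gaussS p (χ ^ 1) = jacobiSum (χ ^ 1) (χ ^ 1) * gaussS p (χ ^ 4) := by
    rw [mulGaussL hord (by norm_num), hJeq31]
  have hM33 : gaussS p (χ ^ 3) * gaussS p (χ ^ 3) = jacobiSum (χ ^ 3) (χ ^ 3) * gaussS p (χ ^ 1) :=
    mulGaussL hord (by norm_num)
  have hM34 : gaussS p (χ ^ 3) * gaussS p (χ ^ 4) = jacobiSum (χ ^ 3) (χ ^ 3) * gaussS p (χ ^ 2) := by
    rw [mulGaussL hord (by norm_num), hJeq34]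
  have hM42 : gaussS p (χ ^ 4) * gaussS p (χ ^ 2) = jacobiSum (χ ^ 4) (χ ^ 4) * gaussS p (χ ^ 1) := by
    rw [mulGaussL hord (by norm_num), hJeq42]
  have hM43 : gaussS p (χ ^ 4) * gaussS p (χ ^ 3) = jacobiSum (χ ^ 3) (χ ^ 3) * gaussS p (χ ^ 2) := by
    rw [mulGaussL hord (by norm_num), hJeq43]
  have hM44 : gaussS p (χ ^ 4) * gaussS p (χ ^ 4) = jacobiSum (χ ^ 4) (χ ^ 4) * gaussS p (χ ^ 3) :=
    mulGaussL hord (by norm_num)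
  have hC1 : jacobiSum (χ ^ 1) (χ ^ 1) * jacobiSum (χ ^ 4) (χ ^ 4) = (p : ℂ) :=
    conjL hord (by norm_num) (by norm_num) (by norm_num) (by norm_num) (by norm_num)
  have hC2 : jacobiSum (χ ^ 2) (χ ^ 2) * jacobiSum (χ ^ 3) (χ ^ 3) = (p : ℂ) :=
    conjL hord (by norm_num) (by norm_num) (by norm_num) (by norm_num) (by norm_num)
  have hRa1 : jacobi3 p (χ ^ 1) (χ ^ 2) (χ ^ 2) = -(jacobiSum (χ ^ 2) (χ ^ 2)) := by
    rw [jacobi3_decomp _ _ _ (by rw [← pow_add, chi_mod hord 3]; exact chi_ne_one hord (by norm_num)),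
      show χ ^ 1 * χ ^ 2 = χ ^ 3 from by rw [← pow_add, chi_mod hord 3],
      jinvL hord (by norm_num) (by norm_num), hJeq12]
    ring
  have hRa2 : jacobi3 p (χ ^ 2) (χ ^ 4) (χ ^ 4) = -(jacobiSum (χ ^ 4) (χ ^ 4)) := by
    rw [jacobi3_decomp _ _ _ (by rw [← pow_add, chi_mod hord 6]; exact chi_ne_one hord (by norm_num)),
      show χ ^ 2 * χ ^ 4 = χ ^ 1 from by rw [← pow_add, chi_mod hord 6],
      jinvL hord (by norm_num) (by norm_num), hJeq24]
    ring
  have hRa3 : jacobi3 p (χ ^ 3) (χ ^ 1) (χ ^ 1) = -(jacobiSum (χ ^ 1) (χ ^ 1)) := by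
    rw [jacobi3_decomp _ _ _ (by rw [← pow_add, chi_mod hord 4]; exact chi_ne_one hord (by norm_num)),
      show χ ^ 3 * χ ^ 1 = χ ^ 4 from by rw [← pow_add, chi_mod hord 4],
      jinvL hord (by norm_num) (by norm_num), hJeq31]
    ring
  have hRa4 : jacobi3 p (χ ^ 4) (χ ^ 3) (χ ^ 3) = -(jacobiSum (χ ^ 3) (χ ^ 3)) := by
    rw [jacobi3_decomp _ _ _ (by rw [← pow_add, chi_mod hord 7]; exact chi_ne_one hord (by norm_num)),
      show χ ^ 4 * χ ^ 3 = χ ^ 2 from by rw [← pow_add, chi_mod hord 7],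
      jinvL hord (by norm_num) (by norm_num), hJeq43]
    ring
  have hRb1 : jacobi3 p (χ ^ 1) (χ ^ 1) (χ ^ 1) = jacobiSum (χ ^ 2) (χ ^ 2) * jacobiSum (χ ^ 1) (χ ^ 1) := by
    rw [jacobi3_decomp _ _ _ (by rw [← pow_add, chi_mod hord 2]; exact chi_ne_one hord (by norm_num)),
      show χ ^ 1 * χ ^ 1 = χ ^ 2 from by rw [← pow_add, chi_mod hord 2]]
    rw [hJeq12]
  have hRb2 : jacobi3 p (χ ^ 2) (χ ^ 2) (χ ^ 2) = jacobiSum (χ ^ 4) (χ ^ 4) * jacobiSum (χ ^ 2) (χ ^ 2) := by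
    rw [jacobi3_decomp _ _ _ (by rw [← pow_add, chi_mod hord 4]; exact chi_ne_one hord (by norm_num)),
      show χ ^ 2 * χ ^ 2 = χ ^ 4 from by rw [← pow_add, chi_mod hord 4]]
    rw [hJeq24]
  have hRb3 : jacobi3 p (χ ^ 3) (χ ^ 3) (χ ^ 3) = jacobiSum (χ ^ 1) (χ ^ 1) * jacobiSum (χ ^ 3) (χ ^ 3) := by
    rw [jacobi3_decomp _ _ _ (by rw [← pow_add, chi_mod hord 6]; exact chi_ne_one hord (by norm_num)),
      show χ ^ 3 * χ ^ 3 = χ ^ 1 from by rw [← pow_add, chi_mod hord 6]]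
    rw [hJeq31]
  have hRb4 : jacobi3 p (χ ^ 4) (χ ^ 4) (χ ^ 4) = jacobiSum (χ ^ 3) (χ ^ 3) * jacobiSum (χ ^ 4) (χ ^ 4) := by
    rw [jacobi3_decomp _ _ _ (by rw [← pow_add, chi_mod hord 8]; exact chi_ne_one hord (by norm_num)),
      show χ ^ 4 * χ ^ 4 = χ ^ 3 from by rw [← pow_add, chi_mod hord 8]]
    rw [hJeq43]
  have hT000 : gaussS p (χ ^ 0) * gaussS p (χ ^ 0) * gaussS p (χ ^ 0) * gaussS p (χ ^ 0) = 1 := by linear_combination (gaussS p (χ ^ 0) ^ 3 - gaussS p (χ ^ 0) ^ 2 + gaussS p (χ ^ 0) - 1) * hB0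
  have hT001 : gaussS p (χ ^ 1) * gaussS p (χ ^ 0) * gaussS p (χ ^ 0) * gaussS p (χ ^ 4) = (p : ℂ) := by linear_combination gaussS p (χ ^ 0) ^ 2 * hP14 + (p : ℂ) * (gaussS p (χ ^ 0) - 1) * hB0
  have hT002 : gaussS p (χ ^ 2) * gaussS p (χ ^ 0) * gaussS p (χ ^ 0) * gaussS p (χ ^ 3) = (p : ℂ) := by linear_combination gaussS p (χ ^ 0) ^ 2 * hP23 + (p : ℂ) * (gaussS p (χ ^ 0) - 1) * hB0
  have hT003 : gaussS p (χ ^ 3) * gaussS p (χ ^ 0) * gaussS p (χ ^ 0) * gaussS p (χ ^ 2) = (p : ℂ) := by linear_combination gaussS p (χ ^ 0) ^ 2 * hP32 + (p : ℂ) * (gaussS p (χ ^ 0) - 1) * hB0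
  have hT004 : gaussS p (χ ^ 4) * gaussS p (χ ^ 0) * gaussS p (χ ^ 0) * gaussS p (χ ^ 1) = (p : ℂ) := by linear_combination gaussS p (χ ^ 0) ^ 2 * hP41 + (p : ℂ) * (gaussS p (χ ^ 0) - 1) * hB0
  have hT010 : gaussS p (χ ^ 1) * gaussS p (χ ^ 0) * gaussS p (χ ^ 4) * gaussS p (χ ^ 0) = (p : ℂ) := by linear_combination gaussS p (χ ^ 0) ^ 2 * hP14 + (p : ℂ) * (gaussS p (χ ^ 0) - 1) * hB0
  have hT011 : gaussS p (χ ^ 2) * gaussS p (χ ^ 0) * gaussS p (χ ^ 4) * gaussS p (χ ^ 4) = -((p : ℂ) * jacobiSum (χ ^ 4) (χ ^ 4)) := by linear_combination gaussS p (χ ^ 2) * gaussS p (χ ^ 0) * hM44 + jacobiSum (χ ^ 4) (χ ^ 4) * gaussS p (χ ^ 0) * hP23 + (p : ℂ) * jacobiSum (χ ^ 4) (χ ^ 4) * hB0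
  have hT012 : gaussS p (χ ^ 3) * gaussS p (χ ^ 0) * gaussS p (χ ^ 4) * gaussS p (χ ^ 3) = -((p : ℂ) * jacobiSum (χ ^ 3) (χ ^ 3)) := by linear_combination gaussS p (χ ^ 3) * gaussS p (χ ^ 0) * hM43 + jacobiSum (χ ^ 3) (χ ^ 3) * gaussS p (χ ^ 0) * hP32 + (p : ℂ) * jacobiSum (χ ^ 3) (χ ^ 3) * hB0
  have hT013 : gaussS p (χ ^ 4) * gaussS p (χ ^ 0) * gaussS p (χ ^ 4) * gaussS p (χ ^ 2) = -((p : ℂ) * jacobiSum (χ ^ 4) (χ ^ 4)) := by linear_combination gaussS p (χ ^ 4) * gaussS p (χ ^ 0) * hM42 + jacobiSum (χ ^ 4) (χ ^ 4) * gaussS p (χ ^ 0) * hP41 + (p : ℂ) * jacobiSum (χ ^ 4) (χ ^ 4) * hB0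
  have hT014 : gaussS p (χ ^ 0) * gaussS p (χ ^ 0) * gaussS p (χ ^ 4) * gaussS p (χ ^ 1) = (p : ℂ) := by linear_combination gaussS p (χ ^ 0) ^ 2 * hP41 + (p : ℂ) * (gaussS p (χ ^ 0) - 1) * hB0
  have hT020 : gaussS p (χ ^ 2) * gaussS p (χ ^ 0) * gaussS p (χ ^ 3) * gaussS p (χ ^ 0) = (p : ℂ) := by linear_combination gaussS p (χ ^ 0) ^ 2 * hP23 + (p : ℂ) * (gaussS p (χ ^ 0) - 1) * hB0
  have hT021 : gaussS p (χ ^ 3) * gaussS p (χ ^ 0) * gaussS p (χ ^ 3) * gaussS p (χ ^ 4) = -((p : ℂ) * jacobiSum (χ ^ 3) (χ ^ 3)) := by linear_combination gaussS p (χ ^ 3) * gaussS p (χ ^ 0) * hM34 + jacobiSum (χ ^ 3) (χ ^ 3) * gaussS p (χ ^ 0) * hP32 + (p : ℂ) * jacobiSum (χ ^ 3) (χ ^ 3) * hB0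
  have hT022 : gaussS p (χ ^ 4) * gaussS p (χ ^ 0) * gaussS p (χ ^ 3) * gaussS p (χ ^ 3) = -((p : ℂ) * jacobiSum (χ ^ 3) (χ ^ 3)) := by linear_combination gaussS p (χ ^ 4) * gaussS p (χ ^ 0) * hM33 + jacobiSum (χ ^ 3) (χ ^ 3) * gaussS p (χ ^ 0) * hP41 + (p : ℂ) * jacobiSum (χ ^ 3) (χ ^ 3) * hB0
  have hT023 : gaussS p (χ ^ 0) * gaussS p (χ ^ 0) * gaussS p (χ ^ 3) * gaussS p (χ ^ 2) = (p : ℂ) := by linear_combination gaussS p (χ ^ 0) ^ 2 * hP32 + (p : ℂ) * (gaussS p (χ ^ 0) - 1) * hB0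
  have hT024 : gaussS p (χ ^ 1) * gaussS p (χ ^ 0) * gaussS p (χ ^ 3) * gaussS p (χ ^ 1) = -((p : ℂ) * jacobiSum (χ ^ 1) (χ ^ 1)) := by linear_combination gaussS p (χ ^ 1) * gaussS p (χ ^ 0) * hM31 + jacobiSum (χ ^ 1) (χ ^ 1) * gaussS p (χ ^ 0) * hP14 + (p : ℂ) * jacobiSum (χ ^ 1) (χ ^ 1) * hB0
  have hT030 : gaussS p (χ ^ 3) * gaussS p (χ ^ 0) * gaussS p (χ ^ 2) * gaussS p (χ ^ 0) = (p : ℂ) := by linear_combination gaussS p (χ ^ 0) ^ 2 * hP32 + (p : ℂ) * (gaussS p (χ ^ 0) - 1) * hB0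
  have hT031 : gaussS p (χ ^ 4) * gaussS p (χ ^ 0) * gaussS p (χ ^ 2) * gaussS p (χ ^ 4) = -((p : ℂ) * jacobiSum (χ ^ 4) (χ ^ 4)) := by linear_combination gaussS p (χ ^ 4) * gaussS p (χ ^ 0) * hM24 + jacobiSum (χ ^ 4) (χ ^ 4) * gaussS p (χ ^ 0) * hP41 + (p : ℂ) * jacobiSum (χ ^ 4) (χ ^ 4) * hB0
  have hT032 : gaussS p (χ ^ 0) * gaussS p (χ ^ 0) * gaussS p (χ ^ 2) * gaussS p (χ ^ 3) = (p : ℂ) := by linear_combination gaussS p (χ ^ 0) ^ 2 * hP23 + (p : ℂ) * (gaussS p (χ ^ 0) - 1) * hB0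
  have hT033 : gaussS p (χ ^ 1) * gaussS p (χ ^ 0) * gaussS p (χ ^ 2) * gaussS p (χ ^ 2) = -((p : ℂ) * jacobiSum (χ ^ 2) (χ ^ 2)) := by linear_combination gaussS p (χ ^ 1) * gaussS p (χ ^ 0) * hM22 + jacobiSum (χ ^ 2) (χ ^ 2) * gaussS p (χ ^ 0) * hP14 + (p : ℂ) * jacobiSum (χ ^ 2) (χ ^ 2) * hB0
  have hT034 : gaussS p (χ ^ 2) * gaussS p (χ ^ 0) * gaussS p (χ ^ 2) * gaussS p (χ ^ 1) = -((p : ℂ) * jacobiSum (χ ^ 2) (χ ^ 2)) := by linear_combination gaussS p (χ ^ 2) * gaussS p (χ ^ 0) * hM21 + jacobiSum (χ ^ 2) (χ ^ 2) * gaussS p (χ ^ 0) * hP23 + (p : ℂ) * jacobiSum (χ ^ 2) (χ ^ 2) * hB0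
  have hT040 : gaussS p (χ ^ 4) * gaussS p (χ ^ 0) * gaussS p (χ ^ 1) * gaussS p (χ ^ 0) = (p : ℂ) := by linear_combination gaussS p (χ ^ 0) ^ 2 * hP41 + (p : ℂ) * (gaussS p (χ ^ 0) - 1) * hB0
  have hT041 : gaussS p (χ ^ 0) * gaussS p (χ ^ 0) * gaussS p (χ ^ 1) * gaussS p (χ ^ 4) = (p : ℂ) := by linear_combination gaussS p (χ ^ 0) ^ 2 * hP14 + (p : ℂ) * (gaussS p (χ ^ 0) - 1) * hB0
  have hT042 : gaussS p (χ ^ 1) * gaussS p (χ ^ 0) * gaussS p (χ ^ 1) * gaussS p (χ ^ 3) = -((p : ℂ) * jacobiSum (χ ^ 1) (χ ^ 1)) := by linear_combination gaussS p (χ ^ 1) * gaussS p (χ ^ 0) * hM13 + jacobiSum (χ ^ 1) (χ ^ 1) * gaussS p (χ ^ 0) * hP14 + (p : ℂ) * jacobiSum (χ ^ 1) (χ ^ 1) * hB0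
  have hT043 : gaussS p (χ ^ 2) * gaussS p (χ ^ 0) * gaussS p (χ ^ 1) * gaussS p (χ ^ 2) = -((p : ℂ) * jacobiSum (χ ^ 2) (χ ^ 2)) := by linear_combination gaussS p (χ ^ 2) * gaussS p (χ ^ 0) * hM12 + jacobiSum (χ ^ 2) (χ ^ 2) * gaussS p (χ ^ 0) * hP23 + (p : ℂ) * jacobiSum (χ ^ 2) (χ ^ 2) * hB0
  have hT044 : gaussS p (χ ^ 3) * gaussS p (χ ^ 0) * gaussS p (χ ^ 1) * gaussS p (χ ^ 1) = -((p : ℂ) * jacobiSum (χ ^ 1) (χ ^ 1)) := by linear_combination gaussS p (χ ^ 3) * gaussS p (χ ^ 0) * hM11 + jacobiSum (χ ^ 1) (χ ^ 1) * gaussS p (χ ^ 0) * hP32 + (p : ℂ) * jacobiSum (χ ^ 1) (χ ^ 1) * hB0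
  have hT100 : gaussS p (χ ^ 1) * gaussS p (χ ^ 4) * gaussS p (χ ^ 0) * gaussS p (χ ^ 0) = (p : ℂ) := by linear_combination gaussS p (χ ^ 0) ^ 2 * hP14 + (p : ℂ) * (gaussS p (χ ^ 0) - 1) * hB0
  have hT101 : gaussS p (χ ^ 2) * gaussS p (χ ^ 4) * gaussS p (χ ^ 0) * gaussS p (χ ^ 4) = -((p : ℂ) * jacobiSum (χ ^ 4) (χ ^ 4)) := by linear_combination gaussS p (χ ^ 2) * gaussS p (χ ^ 0) * hM44 + jacobiSum (χ ^ 4) (χ ^ 4) * gaussS p (χ ^ 0) * hP23 + (p : ℂ) * jacobiSum (χ ^ 4) (χ ^ 4) * hB0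
  have hT102 : gaussS p (χ ^ 3) * gaussS p (χ ^ 4) * gaussS p (χ ^ 0) * gaussS p (χ ^ 3) = -((p : ℂ) * jacobiSum (χ ^ 3) (χ ^ 3)) := by linear_combination gaussS p (χ ^ 3) * gaussS p (χ ^ 0) * hM43 + jacobiSum (χ ^ 3) (χ ^ 3) * gaussS p (χ ^ 0) * hP32 + (p : ℂ) * jacobiSum (χ ^ 3) (χ ^ 3) * hB0
  have hT103 : gaussS p (χ ^ 4) * gaussS p (χ ^ 4) * gaussS p (χ ^ 0) * gaussS p (χ ^ 2) = -((p : ℂ) * jacobiSum (χ ^ 4) (χ ^ 4)) := by linear_combination gaussS p (χ ^ 4) * gaussS p (χ ^ 0) * hM42 + jacobiSum (χ ^ 4) (χ ^ 4) * gaussS p (χ ^ 0) * hP41 + (p : ℂ) * jacobiSum (χ ^ 4) (χ ^ 4) * hB0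
  have hT104 : gaussS p (χ ^ 0) * gaussS p (χ ^ 4) * gaussS p (χ ^ 0) * gaussS p (χ ^ 1) = (p : ℂ) := by linear_combination gaussS p (χ ^ 0) ^ 2 * hP41 + (p : ℂ) * (gaussS p (χ ^ 0) - 1) * hB0
  have hT110 : gaussS p (χ ^ 2) * gaussS p (χ ^ 4) * gaussS p (χ ^ 4) * gaussS p (χ ^ 0) = -((p : ℂ) * jacobiSum (χ ^ 4) (χ ^ 4)) := by linear_combination gaussS p (χ ^ 2) * gaussS p (χ ^ 0) * hM44 + jacobiSum (χ ^ 4) (χ ^ 4) * gaussS p (χ ^ 0) * hP23 + (p : ℂ) * jacobiSum (χ ^ 4) (χ ^ 4) * hB0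
  have hT111 : gaussS p (χ ^ 3) * gaussS p (χ ^ 4) * gaussS p (χ ^ 4) * gaussS p (χ ^ 4) = (p : ℂ) * jacobiSum (χ ^ 4) (χ ^ 4) * jacobiSum (χ ^ 3) (χ ^ 3) := by linear_combination gaussS p (χ ^ 3) * gaussS p (χ ^ 4) * hM44 + gaussS p (χ ^ 3) * jacobiSum (χ ^ 4) (χ ^ 4) * hM34 + jacobiSum (χ ^ 4) (χ ^ 4) * jacobiSum (χ ^ 3) (χ ^ 3) * hP32
  have hT112 : gaussS p (χ ^ 4) * gaussS p (χ ^ 4) * gaussS p (χ ^ 4) * gaussS p (χ ^ 3) = (p : ℂ) * jacobiSum (χ ^ 4) (χ ^ 4) * jacobiSum (χ ^ 3) (χ ^ 3) := by linear_combination gaussS p (χ ^ 4) * gaussS p (χ ^ 3) * hM44 + gaussS p (χ ^ 4) * jacobiSum (χ ^ 4) (χ ^ 4) * hM33 + jacobiSum (χ ^ 4) (χ ^ 4) * jacobiSum (χ ^ 3) (χ ^ 3) * hP41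
  have hT113 : gaussS p (χ ^ 0) * gaussS p (χ ^ 4) * gaussS p (χ ^ 4) * gaussS p (χ ^ 2) = -((p : ℂ) * jacobiSum (χ ^ 4) (χ ^ 4)) := by linear_combination gaussS p (χ ^ 0) * gaussS p (χ ^ 2) * hM44 + jacobiSum (χ ^ 4) (χ ^ 4) * gaussS p (χ ^ 0) * hP32 + (p : ℂ) * jacobiSum (χ ^ 4) (χ ^ 4) * hB0
  have hT114 : gaussS p (χ ^ 1) * gaussS p (χ ^ 4) * gaussS p (χ ^ 4) * gaussS p (χ ^ 1) = (p : ℂ) * jacobiSum (χ ^ 4) (χ ^ 4) * jacobiSum (χ ^ 1) (χ ^ 1) := by linear_combination gaussS p (χ ^ 1) * gaussS p (χ ^ 1) * hM44 + gaussS p (χ ^ 1) * jacobiSum (χ ^ 4) (χ ^ 4) * hM31 + jacobiSum (χ ^ 4) (χ ^ 4) * jacobiSum (χ ^ 1) (χ ^ 1) * hP14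
  have hT120 : gaussS p (χ ^ 3) * gaussS p (χ ^ 4) * gaussS p (χ ^ 3) * gaussS p (χ ^ 0) = -((p : ℂ) * jacobiSum (χ ^ 3) (χ ^ 3)) := by linear_combination gaussS p (χ ^ 3) * gaussS p (χ ^ 0) * hM43 + jacobiSum (χ ^ 3) (χ ^ 3) * gaussS p (χ ^ 0) * hP32 + (p : ℂ) * jacobiSum (χ ^ 3) (χ ^ 3) * hB0
  have hT121 : gaussS p (χ ^ 4) * gaussS p (χ ^ 4) * gaussS p (χ ^ 3) * gaussS p (χ ^ 4) = (p : ℂ) * jacobiSum (χ ^ 3) (χ ^ 3) * jacobiSum (χ ^ 4) (χ ^ 4) := by linear_combination gaussS p (χ ^ 4) * gaussS p (χ ^ 4) * hM43 + gaussS p (χ ^ 4) * jacobiSum (χ ^ 3) (χ ^ 3) * hM24 + jacobiSum (χ ^ 3) (χ ^ 3) * jacobiSum (χ ^ 4) (χ ^ 4) * hP41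
  have hT122 : gaussS p (χ ^ 0) * gaussS p (χ ^ 4) * gaussS p (χ ^ 3) * gaussS p (χ ^ 3) = -((p : ℂ) * jacobiSum (χ ^ 3) (χ ^ 3)) := by linear_combination gaussS p (χ ^ 0) * gaussS p (χ ^ 3) * hM43 + jacobiSum (χ ^ 3) (χ ^ 3) * gaussS p (χ ^ 0) * hP23 + (p : ℂ) * jacobiSum (χ ^ 3) (χ ^ 3) * hB0
  have hT123 : gaussS p (χ ^ 1) * gaussS p (χ ^ 4) * gaussS p (χ ^ 3) * gaussS p (χ ^ 2) = (p : ℂ) * jacobiSum (χ ^ 3) (χ ^ 3) * jacobiSum (χ ^ 2) (χ ^ 2) := by linear_combination gaussS p (χ ^ 1) * gaussS p (χ ^ 2) * hM43 + gaussS p (χ ^ 1) * jacobiSum (χ ^ 3) (χ ^ 3) * hM22 + jacobiSum (χ ^ 3) (χ ^ 3) * jacobiSum (χ ^ 2) (χ ^ 2) * hP14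
  have hT124 : gaussS p (χ ^ 2) * gaussS p (χ ^ 4) * gaussS p (χ ^ 3) * gaussS p (χ ^ 1) = (p : ℂ) * jacobiSum (χ ^ 3) (χ ^ 3) * jacobiSum (χ ^ 2) (χ ^ 2) := by linear_combination gaussS p (χ ^ 2) * gaussS p (χ ^ 1) * hM43 + gaussS p (χ ^ 2) * jacobiSum (χ ^ 3) (χ ^ 3) * hM21 + jacobiSum (χ ^ 3) (χ ^ 3) * jacobiSum (χ ^ 2) (χ ^ 2) * hP23
  have hT130 : gaussS p (χ ^ 4) * gaussS p (χ ^ 4) * gaussS p (χ ^ 2) * gaussS p (χ ^ 0) = -((p : ℂ) * jacobiSum (χ ^ 4) (χ ^ 4)) := by linear_combination gaussS p (χ ^ 4) * gaussS p (χ ^ 0) * hM42 + jacobiSum (χ ^ 4) (χ ^ 4) * gaussS p (χ ^ 0) * hP41 + (p : ℂ) * jacobiSum (χ ^ 4) (χ ^ 4) * hB0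
  have hT131 : gaussS p (χ ^ 0) * gaussS p (χ ^ 4) * gaussS p (χ ^ 2) * gaussS p (χ ^ 4) = -((p : ℂ) * jacobiSum (χ ^ 4) (χ ^ 4)) := by linear_combination gaussS p (χ ^ 0) * gaussS p (χ ^ 4) * hM42 + jacobiSum (χ ^ 4) (χ ^ 4) * gaussS p (χ ^ 0) * hP14 + (p : ℂ) * jacobiSum (χ ^ 4) (χ ^ 4) * hB0
  have hT132 : gaussS p (χ ^ 1) * gaussS p (χ ^ 4) * gaussS p (χ ^ 2) * gaussS p (χ ^ 3) = (p : ℂ) * jacobiSum (χ ^ 4) (χ ^ 4) * jacobiSum (χ ^ 1) (χ ^ 1) := by linear_combination gaussS p (χ ^ 1) * gaussS p (χ ^ 3) * hM42 + gaussS p (χ ^ 1) * jacobiSum (χ ^ 4) (χ ^ 4) * hM13 + jacobiSum (χ ^ 4) (χ ^ 4) * jacobiSum (χ ^ 1) (χ ^ 1) * hP14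
  have hT133 : gaussS p (χ ^ 2) * gaussS p (χ ^ 4) * gaussS p (χ ^ 2) * gaussS p (χ ^ 2) = (p : ℂ) * jacobiSum (χ ^ 4) (χ ^ 4) * jacobiSum (χ ^ 2) (χ ^ 2) := by linear_combination gaussS p (χ ^ 2) * gaussS p (χ ^ 2) * hM42 + gaussS p (χ ^ 2) * jacobiSum (χ ^ 4) (χ ^ 4) * hM12 + jacobiSum (χ ^ 4) (χ ^ 4) * jacobiSum (χ ^ 2) (χ ^ 2) * hP23
  have hT134 : gaussS p (χ ^ 3) * gaussS p (χ ^ 4) * gaussS p (χ ^ 2) * gaussS p (χ ^ 1) = (p : ℂ) * jacobiSum (χ ^ 4) (χ ^ 4) * jacobiSum (χ ^ 1) (χ ^ 1) := by linear_combination gaussS p (χ ^ 3) * gaussS p (χ ^ 1) * hM42 + gaussS p (χ ^ 3) * jacobiSum (χ ^ 4) (χ ^ 4) * hM11 + jacobiSum (χ ^ 4) (χ ^ 4) * jacobiSum (χ ^ 1) (χ ^ 1) * hP32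
  have hT140 : gaussS p (χ ^ 0) * gaussS p (χ ^ 4) * gaussS p (χ ^ 1) * gaussS p (χ ^ 0) = (p : ℂ) := by linear_combination gaussS p (χ ^ 0) ^ 2 * hP41 + (p : ℂ) * (gaussS p (χ ^ 0) - 1) * hB0
  have hT141 : gaussS p (χ ^ 1) * gaussS p (χ ^ 4) * gaussS p (χ ^ 1) * gaussS p (χ ^ 4) = (p : ℂ) * (p : ℂ) := by linear_combination gaussS p (χ ^ 1) * gaussS p (χ ^ 4) * hP41 + (p : ℂ) * hP14
  have hT142 : gaussS p (χ ^ 2) * gaussS p (χ ^ 4) * gaussS p (χ ^ 1) * gaussS p (χ ^ 3) = (p : ℂ) * (p : ℂ) := by linear_combination gaussS p (χ ^ 2) * gaussS p (χ ^ 3) * hP41 + (p : ℂ) * hP23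
  have hT143 : gaussS p (χ ^ 3) * gaussS p (χ ^ 4) * gaussS p (χ ^ 1) * gaussS p (χ ^ 2) = (p : ℂ) * (p : ℂ) := by linear_combination gaussS p (χ ^ 3) * gaussS p (χ ^ 2) * hP41 + (p : ℂ) * hP32
  have hT144 : gaussS p (χ ^ 4) * gaussS p (χ ^ 4) * gaussS p (χ ^ 1) * gaussS p (χ ^ 1) = (p : ℂ) * (p : ℂ) := by linear_combination gaussS p (χ ^ 4) * gaussS p (χ ^ 1) * hP41 + (p : ℂ) * hP41
  have hT200 : gaussS p (χ ^ 2) * gaussS p (χ ^ 3) * gaussS p (χ ^ 0) * gaussS p (χ ^ 0) = (p : ℂ) := by linear_combination gaussS p (χ ^ 0) ^ 2 * hP23 + (p : ℂ) * (gaussS p (χ ^ 0) - 1) * hB0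
  have hT201 : gaussS p (χ ^ 3) * gaussS p (χ ^ 3) * gaussS p (χ ^ 0) * gaussS p (χ ^ 4) = -((p : ℂ) * jacobiSum (χ ^ 3) (χ ^ 3)) := by linear_combination gaussS p (χ ^ 3) * gaussS p (χ ^ 0) * hM34 + jacobiSum (χ ^ 3) (χ ^ 3) * gaussS p (χ ^ 0) * hP32 + (p : ℂ) * jacobiSum (χ ^ 3) (χ ^ 3) * hB0
  have hT202 : gaussS p (χ ^ 4) * gaussS p (χ ^ 3) * gaussS p (χ ^ 0) * gaussS p (χ ^ 3) = -((p : ℂ) * jacobiSum (χ ^ 3) (χ ^ 3)) := by linear_combination gaussS p (χ ^ 4) * gaussS p (χ ^ 0) * hM33 + jacobiSum (χ ^ 3) (χ ^ 3) * gaussS p (χ ^ 0) * hP41 + (p : ℂ) * jacobiSum (χ ^ 3) (χ ^ 3) * hB0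
  have hT203 : gaussS p (χ ^ 0) * gaussS p (χ ^ 3) * gaussS p (χ ^ 0) * gaussS p (χ ^ 2) = (p : ℂ) := by linear_combination gaussS p (χ ^ 0) ^ 2 * hP32 + (p : ℂ) * (gaussS p (χ ^ 0) - 1) * hB0
  have hT204 : gaussS p (χ ^ 1) * gaussS p (χ ^ 3) * gaussS p (χ ^ 0) * gaussS p (χ ^ 1) = -((p : ℂ) * jacobiSum (χ ^ 1) (χ ^ 1)) := by linear_combination gaussS p (χ ^ 1) * gaussS p (χ ^ 0) * hM31 + jacobiSum (χ ^ 1) (χ ^ 1) * gaussS p (χ ^ 0) * hP14 + (p : ℂ) * jacobiSum (χ ^ 1) (χ ^ 1) * hB0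
  have hT210 : gaussS p (χ ^ 3) * gaussS p (χ ^ 3) * gaussS p (χ ^ 4) * gaussS p (χ ^ 0) = -((p : ℂ) * jacobiSum (χ ^ 3) (χ ^ 3)) := by linear_combination gaussS p (χ ^ 3) * gaussS p (χ ^ 0) * hM34 + jacobiSum (χ ^ 3) (χ ^ 3) * gaussS p (χ ^ 0) * hP32 + (p : ℂ) * jacobiSum (χ ^ 3) (χ ^ 3) * hB0
  have hT211 : gaussS p (χ ^ 4) * gaussS p (χ ^ 3) * gaussS p (χ ^ 4) * gaussS p (χ ^ 4) = (p : ℂ) * jacobiSum (χ ^ 3) (χ ^ 3) * jacobiSum (χ ^ 4) (χ ^ 4) := by linear_combination gaussS p (χ ^ 4) * gaussS p (χ ^ 4) * hM34 + gaussS p (χ ^ 4) * jacobiSum (χ ^ 3) (χ ^ 3) * hM24 + jacobiSum (χ ^ 3) (χ ^ 3) * jacobiSum (χ ^ 4) (χ ^ 4) * hP41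
  have hT212 : gaussS p (χ ^ 0) * gaussS p (χ ^ 3) * gaussS p (χ ^ 4) * gaussS p (χ ^ 3) = -((p : ℂ) * jacobiSum (χ ^ 3) (χ ^ 3)) := by linear_combination gaussS p (χ ^ 0) * gaussS p (χ ^ 3) * hM34 + jacobiSum (χ ^ 3) (χ ^ 3) * gaussS p (χ ^ 0) * hP23 + (p : ℂ) * jacobiSum (χ ^ 3) (χ ^ 3) * hB0
  have hT213 : gaussS p (χ ^ 1) * gaussS p (χ ^ 3) * gaussS p (χ ^ 4) * gaussS p (χ ^ 2) = (p : ℂ) * jacobiSum (χ ^ 3) (χ ^ 3) * jacobiSum (χ ^ 2) (χ ^ 2) := by linear_combination gaussS p (χ ^ 1) * gaussS p (χ ^ 2) * hM34 + gaussS p (χ ^ 1) * jacobiSum (χ ^ 3) (χ ^ 3) * hM22 + jacobiSum (χ ^ 3) (χ ^ 3) * jacobiSum (χ ^ 2) (χ ^ 2) * hP14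
  have hT214 : gaussS p (χ ^ 2) * gaussS p (χ ^ 3) * gaussS p (χ ^ 4) * gaussS p (χ ^ 1) = (p : ℂ) * jacobiSum (χ ^ 3) (χ ^ 3) * jacobiSum (χ ^ 2) (χ ^ 2) := by linear_combination gaussS p (χ ^ 2) * gaussS p (χ ^ 1) * hM34 + gaussS p (χ ^ 2) * jacobiSum (χ ^ 3) (χ ^ 3) * hM21 + jacobiSum (χ ^ 3) (χ ^ 3) * jacobiSum (χ ^ 2) (χ ^ 2) * hP23
  have hT220 : gaussS p (χ ^ 4) * gaussS p (χ ^ 3) * gaussS p (χ ^ 3) * gaussS p (χ ^ 0) = -((p : ℂ) * jacobiSum (χ ^ 3) (χ ^ 3)) := by linear_combination gaussS p (χ ^ 4) * gaussS p (χ ^ 0) * hM33 + jacobiSum (χ ^ 3) (χ ^ 3) * gaussS p (χ ^ 0) * hP41 + (p : ℂ) * jacobiSum (χ ^ 3) (χ ^ 3) * hB0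
  have hT221 : gaussS p (χ ^ 0) * gaussS p (χ ^ 3) * gaussS p (χ ^ 3) * gaussS p (χ ^ 4) = -((p : ℂ) * jacobiSum (χ ^ 3) (χ ^ 3)) := by linear_combination gaussS p (χ ^ 0) * gaussS p (χ ^ 4) * hM33 + jacobiSum (χ ^ 3) (χ ^ 3) * gaussS p (χ ^ 0) * hP14 + (p : ℂ) * jacobiSum (χ ^ 3) (χ ^ 3) * hB0
  have hT222 : gaussS p (χ ^ 1) * gaussS p (χ ^ 3) * gaussS p (χ ^ 3) * gaussS p (χ ^ 3) = (p : ℂ) * jacobiSum (χ ^ 3) (χ ^ 3) * jacobiSum (χ ^ 1) (χ ^ 1) := by linear_combination gaussS p (χ ^ 1) * gaussS p (χ ^ 3) * hM33 + gaussS p (χ ^ 1) * jacobiSum (χ ^ 3) (χ ^ 3) * hM13 + jacobiSum (χ ^ 3) (χ ^ 3) * jacobiSum (χ ^ 1) (χ ^ 1) * hP14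
  have hT223 : gaussS p (χ ^ 2) * gaussS p (χ ^ 3) * gaussS p (χ ^ 3) * gaussS p (χ ^ 2) = (p : ℂ) * jacobiSum (χ ^ 3) (χ ^ 3) * jacobiSum (χ ^ 2) (χ ^ 2) := by linear_combination gaussS p (χ ^ 2) * gaussS p (χ ^ 2) * hM33 + gaussS p (χ ^ 2) * jacobiSum (χ ^ 3) (χ ^ 3) * hM12 + jacobiSum (χ ^ 3) (χ ^ 3) * jacobiSum (χ ^ 2) (χ ^ 2) * hP23
  have hT224 : gaussS p (χ ^ 3) * gaussS p (χ ^ 3) * gaussS p (χ ^ 3) * gaussS p (χ ^ 1) = (p : ℂ) * jacobiSum (χ ^ 3) (χ ^ 3) * jacobiSum (χ ^ 1) (χ ^ 1) := by linear_combination gaussS p (χ ^ 3) * gaussS p (χ ^ 1) * hM33 + gaussS p (χ ^ 3) * jacobiSum (χ ^ 3) (χ ^ 3) * hM11 + jacobiSum (χ ^ 3) (χ ^ 3) * jacobiSum (χ ^ 1) (χ ^ 1) * hP32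
  have hT230 : gaussS p (χ ^ 0) * gaussS p (χ ^ 3) * gaussS p (χ ^ 2) * gaussS p (χ ^ 0) = (p : ℂ) := by linear_combination gaussS p (χ ^ 0) ^ 2 * hP32 + (p : ℂ) * (gaussS p (χ ^ 0) - 1) * hB0
  have hT231 : gaussS p (χ ^ 1) * gaussS p (χ ^ 3) * gaussS p (χ ^ 2) * gaussS p (χ ^ 4) = (p : ℂ) * (p : ℂ) := by linear_combination gaussS p (χ ^ 1) * gaussS p (χ ^ 4) * hP32 + (p : ℂ) * hP14
  have hT232 : gaussS p (χ ^ 2) * gaussS p (χ ^ 3) * gaussS p (χ ^ 2) * gaussS p (χ ^ 3) = (p : ℂ) * (p : ℂ) := by linear_combination gaussS p (χ ^ 2) * gaussS p (χ ^ 3) * hP32 + (p : ℂ) * hP23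
  have hT233 : gaussS p (χ ^ 3) * gaussS p (χ ^ 3) * gaussS p (χ ^ 2) * gaussS p (χ ^ 2) = (p : ℂ) * (p : ℂ) := by linear_combination gaussS p (χ ^ 3) * gaussS p (χ ^ 2) * hP32 + (p : ℂ) * hP32
  have hT234 : gaussS p (χ ^ 4) * gaussS p (χ ^ 3) * gaussS p (χ ^ 2) * gaussS p (χ ^ 1) = (p : ℂ) * (p : ℂ) := by linear_combination gaussS p (χ ^ 4) * gaussS p (χ ^ 1) * hP32 + (p : ℂ) * hP41
  have hT240 : gaussS p (χ ^ 1) * gaussS p (χ ^ 3) * gaussS p (χ ^ 1) * gaussS p (χ ^ 0) = -((p : ℂ) * jacobiSum (χ ^ 1) (χ ^ 1)) := by linear_combination gaussS p (χ ^ 1) * gaussS p (χ ^ 0) * hM31 + jacobiSum (χ ^ 1) (χ ^ 1) * gaussS p (χ ^ 0) * hP14 + (p : ℂ) * jacobiSum (χ ^ 1) (χ ^ 1) * hB0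
  have hT241 : gaussS p (χ ^ 2) * gaussS p (χ ^ 3) * gaussS p (χ ^ 1) * gaussS p (χ ^ 4) = (p : ℂ) * jacobiSum (χ ^ 1) (χ ^ 1) * jacobiSum (χ ^ 4) (χ ^ 4) := by linear_combination gaussS p (χ ^ 2) * gaussS p (χ ^ 4) * hM31 + gaussS p (χ ^ 2) * jacobiSum (χ ^ 1) (χ ^ 1) * hM44 + jacobiSum (χ ^ 1) (χ ^ 1) * jacobiSum (χ ^ 4) (χ ^ 4) * hP23
  have hT242 : gaussS p (χ ^ 3) * gaussS p (χ ^ 3) * gaussS p (χ ^ 1) * gaussS p (χ ^ 3) = (p : ℂ) * jacobiSum (χ ^ 1) (χ ^ 1) * jacobiSum (χ ^ 3) (χ ^ 3) := by linear_combination gaussS p (χ ^ 3) * gaussS p (χ ^ 3) * hM31 + gaussS p (χ ^ 3) * jacobiSum (χ ^ 1) (χ ^ 1) * hM43 + jacobiSum (χ ^ 1) (χ ^ 1) * jacobiSum (χ ^ 3) (χ ^ 3) * hP32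
  have hT243 : gaussS p (χ ^ 4) * gaussS p (χ ^ 3) * gaussS p (χ ^ 1) * gaussS p (χ ^ 2) = (p : ℂ) * jacobiSum (χ ^ 1) (χ ^ 1) * jacobiSum (χ ^ 4) (χ ^ 4) := by linear_combination gaussS p (χ ^ 4) * gaussS p (χ ^ 2) * hM31 + gaussS p (χ ^ 4) * jacobiSum (χ ^ 1) (χ ^ 1) * hM42 + jacobiSum (χ ^ 1) (χ ^ 1) * jacobiSum (χ ^ 4) (χ ^ 4) * hP41
  have hT244 : gaussS p (χ ^ 0) * gaussS p (χ ^ 3) * gaussS p (χ ^ 1) * gaussS p (χ ^ 1) = -((p : ℂ) * jacobiSum (χ ^ 1) (χ ^ 1)) := by linear_combination gaussS p (χ ^ 0) * gaussS p (χ ^ 1) * hM31 + jacobiSum (χ ^ 1) (χ ^ 1) * gaussS p (χ ^ 0) * hP41 + (p : ℂ) * jacobiSum (χ ^ 1) (χ ^ 1) * hB0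
  have hT300 : gaussS p (χ ^ 3) * gaussS p (χ ^ 2) * gaussS p (χ ^ 0) * gaussS p (χ ^ 0) = (p : ℂ) := by linear_combination gaussS p (χ ^ 0) ^ 2 * hP32 + (p : ℂ) * (gaussS p (χ ^ 0) - 1) * hB0
  have hT301 : gaussS p (χ ^ 4) * gaussS p (χ ^ 2) * gaussS p (χ ^ 0) * gaussS p (χ ^ 4) = -((p : ℂ) * jacobiSum (χ ^ 4) (χ ^ 4)) := by linear_combination gaussS p (χ ^ 4) * gaussS p (χ ^ 0) * hM24 + jacobiSum (χ ^ 4) (χ ^ 4) * gaussS p (χ ^ 0) * hP41 + (p : ℂ) * jacobiSum (χ ^ 4) (χ ^ 4) * hB0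
  have hT302 : gaussS p (χ ^ 0) * gaussS p (χ ^ 2) * gaussS p (χ ^ 0) * gaussS p (χ ^ 3) = (p : ℂ) := by linear_combination gaussS p (χ ^ 0) ^ 2 * hP23 + (p : ℂ) * (gaussS p (χ ^ 0) - 1) * hB0
  have hT303 : gaussS p (χ ^ 1) * gaussS p (χ ^ 2) * gaussS p (χ ^ 0) * gaussS p (χ ^ 2) = -((p : ℂ) * jacobiSum (χ ^ 2) (χ ^ 2)) := by linear_combination gaussS p (χ ^ 1) * gaussS p (χ ^ 0) * hM22 + jacobiSum (χ ^ 2) (χ ^ 2) * gaussS p (χ ^ 0) * hP14 + (p : ℂ) * jacobiSum (χ ^ 2) (χ ^ 2) * hB0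
  have hT304 : gaussS p (χ ^ 2) * gaussS p (χ ^ 2) * gaussS p (χ ^ 0) * gaussS p (χ ^ 1) = -((p : ℂ) * jacobiSum (χ ^ 2) (χ ^ 2)) := by linear_combination gaussS p (χ ^ 2) * gaussS p (χ ^ 0) * hM21 + jacobiSum (χ ^ 2) (χ ^ 2) * gaussS p (χ ^ 0) * hP23 + (p : ℂ) * jacobiSum (χ ^ 2) (χ ^ 2) * hB0
  have hT310 : gaussS p (χ ^ 4) * gaussS p (χ ^ 2) * gaussS p (χ ^ 4) * gaussS p (χ ^ 0) = -((p : ℂ) * jacobiSum (χ ^ 4) (χ ^ 4)) := by linear_combination gaussS p (χ ^ 4) * gaussS p (χ ^ 0) * hM24 + jacobiSum (χ ^ 4) (χ ^ 4) * gaussS p (χ ^ 0) * hP41 + (p : ℂ) * jacobiSum (χ ^ 4) (χ ^ 4) * hB0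
  have hT311 : gaussS p (χ ^ 0) * gaussS p (χ ^ 2) * gaussS p (χ ^ 4) * gaussS p (χ ^ 4) = -((p : ℂ) * jacobiSum (χ ^ 4) (χ ^ 4)) := by linear_combination gaussS p (χ ^ 0) * gaussS p (χ ^ 4) * hM24 + jacobiSum (χ ^ 4) (χ ^ 4) * gaussS p (χ ^ 0) * hP14 + (p : ℂ) * jacobiSum (χ ^ 4) (χ ^ 4) * hB0
  have hT312 : gaussS p (χ ^ 1) * gaussS p (χ ^ 2) * gaussS p (χ ^ 4) * gaussS p (χ ^ 3) = (p : ℂ) * jacobiSum (χ ^ 4) (χ ^ 4) * jacobiSum (χ ^ 1) (χ ^ 1) := by linear_combination gaussS p (χ ^ 1) * gaussS p (χ ^ 3) * hM24 + gaussS p (χ ^ 1) * jacobiSum (χ ^ 4) (χ ^ 4) * hM13 + jacobiSum (χ ^ 4) (χ ^ 4) * jacobiSum (χ ^ 1) (χ ^ 1) * hP14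
  have hT313 : gaussS p (χ ^ 2) * gaussS p (χ ^ 2) * gaussS p (χ ^ 4) * gaussS p (χ ^ 2) = (p : ℂ) * jacobiSum (χ ^ 4) (χ ^ 4) * jacobiSum (χ ^ 2) (χ ^ 2) := by linear_combination gaussS p (χ ^ 2) * gaussS p (χ ^ 2) * hM24 + gaussS p (χ ^ 2) * jacobiSum (χ ^ 4) (χ ^ 4) * hM12 + jacobiSum (χ ^ 4) (χ ^ 4) * jacobiSum (χ ^ 2) (χ ^ 2) * hP23
  have hT314 : gaussS p (χ ^ 3) * gaussS p (χ ^ 2) * gaussS p (χ ^ 4) * gaussS p (χ ^ 1) = (p : ℂ) * jacobiSum (χ ^ 4) (χ ^ 4) * jacobiSum (χ ^ 1) (χ ^ 1) := by linear_combination gaussS p (χ ^ 3) * gaussS p (χ ^ 1) * hM24 + gaussS p (χ ^ 3) * jacobiSum (χ ^ 4) (χ ^ 4) * hM11 + jacobiSum (χ ^ 4) (χ ^ 4) * jacobiSum (χ ^ 1) (χ ^ 1) * hP32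
  have hT320 : gaussS p (χ ^ 0) * gaussS p (χ ^ 2) * gaussS p (χ ^ 3) * gaussS p (χ ^ 0) = (p : ℂ) := by linear_combination gaussS p (χ ^ 0) ^ 2 * hP23 + (p : ℂ) * (gaussS p (χ ^ 0) - 1) * hB0
  have hT321 : gaussS p (χ ^ 1) * gaussS p (χ ^ 2) * gaussS p (χ ^ 3) * gaussS p (χ ^ 4) = (p : ℂ) * (p : ℂ) := by linear_combination gaussS p (χ ^ 1) * gaussS p (χ ^ 4) * hP23 + (p : ℂ) * hP14
  have hT322 : gaussS p (χ ^ 2) * gaussS p (χ ^ 2) * gaussS p (χ ^ 3) * gaussS p (χ ^ 3) = (p : ℂ) * (p : ℂ) := by linear_combination gaussS p (χ ^ 2) * gaussS p (χ ^ 3) * hP23 + (p : ℂ) * hP23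
  have hT323 : gaussS p (χ ^ 3) * gaussS p (χ ^ 2) * gaussS p (χ ^ 3) * gaussS p (χ ^ 2) = (p : ℂ) * (p : ℂ) := by linear_combination gaussS p (χ ^ 3) * gaussS p (χ ^ 2) * hP23 + (p : ℂ) * hP32
  have hT324 : gaussS p (χ ^ 4) * gaussS p (χ ^ 2) * gaussS p (χ ^ 3) * gaussS p (χ ^ 1) = (p : ℂ) * (p : ℂ) := by linear_combination gaussS p (χ ^ 4) * gaussS p (χ ^ 1) * hP23 + (p : ℂ) * hP41
  have hT330 : gaussS p (χ ^ 1) * gaussS p (χ ^ 2) * gaussS p (χ ^ 2) * gaussS p (χ ^ 0) = -((p : ℂ) * jacobiSum (χ ^ 2) (χ ^ 2)) := by linear_combination gaussS p (χ ^ 1) * gaussS p (χ ^ 0) * hM22 + jacobiSum (χ ^ 2) (χ ^ 2) * gaussS p (χ ^ 0) * hP14 + (p : ℂ) * jacobiSum (χ ^ 2) (χ ^ 2) * hB0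
  have hT331 : gaussS p (χ ^ 2) * gaussS p (χ ^ 2) * gaussS p (χ ^ 2) * gaussS p (χ ^ 4) = (p : ℂ) * jacobiSum (χ ^ 2) (χ ^ 2) * jacobiSum (χ ^ 4) (χ ^ 4) := by linear_combination gaussS p (χ ^ 2) * gaussS p (χ ^ 4) * hM22 + gaussS p (χ ^ 2) * jacobiSum (χ ^ 2) (χ ^ 2) * hM44 + jacobiSum (χ ^ 2) (χ ^ 2) * jacobiSum (χ ^ 4) (χ ^ 4) * hP23
  have hT332 : gaussS p (χ ^ 3) * gaussS p (χ ^ 2) * gaussS p (χ ^ 2) * gaussS p (χ ^ 3) = (p : ℂ) * jacobiSum (χ ^ 2) (χ ^ 2) * jacobiSum (χ ^ 3) (χ ^ 3) := by linear_combination gaussS p (χ ^ 3) * gaussS p (χ ^ 3) * hM22 + gaussS p (χ ^ 3) * jacobiSum (χ ^ 2) (χ ^ 2) * hM43 + jacobiSum (χ ^ 2) (χ ^ 2) * jacobiSum (χ ^ 3) (χ ^ 3) * hP32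
  have hT333 : gaussS p (χ ^ 4) * gaussS p (χ ^ 2) * gaussS p (χ ^ 2) * gaussS p (χ ^ 2) = (p : ℂ) * jacobiSum (χ ^ 2) (χ ^ 2) * jacobiSum (χ ^ 4) (χ ^ 4) := by linear_combination gaussS p (χ ^ 4) * gaussS p (χ ^ 2) * hM22 + gaussS p (χ ^ 4) * jacobiSum (χ ^ 2) (χ ^ 2) * hM42 + jacobiSum (χ ^ 2) (χ ^ 2) * jacobiSum (χ ^ 4) (χ ^ 4) * hP41
  have hT334 : gaussS p (χ ^ 0) * gaussS p (χ ^ 2) * gaussS p (χ ^ 2) * gaussS p (χ ^ 1) = -((p : ℂ) * jacobiSum (χ ^ 2) (χ ^ 2)) := by linear_combination gaussS p (χ ^ 0) * gaussS p (χ ^ 1) * hM22 + jacobiSum (χ ^ 2) (χ ^ 2) * gaussS p (χ ^ 0) * hP41 + (p : ℂ) * jacobiSum (χ ^ 2) (χ ^ 2) * hB0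
  have hT340 : gaussS p (χ ^ 2) * gaussS p (χ ^ 2) * gaussS p (χ ^ 1) * gaussS p (χ ^ 0) = -((p : ℂ) * jacobiSum (χ ^ 2) (χ ^ 2)) := by linear_combination gaussS p (χ ^ 2) * gaussS p (χ ^ 0) * hM21 + jacobiSum (χ ^ 2) (χ ^ 2) * gaussS p (χ ^ 0) * hP23 + (p : ℂ) * jacobiSum (χ ^ 2) (χ ^ 2) * hB0
  have hT341 : gaussS p (χ ^ 3) * gaussS p (χ ^ 2) * gaussS p (χ ^ 1) * gaussS p (χ ^ 4) = (p : ℂ) * jacobiSum (χ ^ 2) (χ ^ 2) * jacobiSum (χ ^ 3) (χ ^ 3) := by linear_combination gaussS p (χ ^ 3) * gaussS p (χ ^ 4) * hM21 + gaussS p (χ ^ 3) * jacobiSum (χ ^ 2) (χ ^ 2) * hM34 + jacobiSum (χ ^ 2) (χ ^ 2) * jacobiSum (χ ^ 3) (χ ^ 3) * hP32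
  have hT342 : gaussS p (χ ^ 4) * gaussS p (χ ^ 2) * gaussS p (χ ^ 1) * gaussS p (χ ^ 3) = (p : ℂ) * jacobiSum (χ ^ 2) (χ ^ 2) * jacobiSum (χ ^ 3) (χ ^ 3) := by linear_combination gaussS p (χ ^ 4) * gaussS p (χ ^ 3) * hM21 + gaussS p (χ ^ 4) * jacobiSum (χ ^ 2) (χ ^ 2) * hM33 + jacobiSum (χ ^ 2) (χ ^ 2) * jacobiSum (χ ^ 3) (χ ^ 3) * hP41
  have hT343 : gaussS p (χ ^ 0) * gaussS p (χ ^ 2) * gaussS p (χ ^ 1) * gaussS p (χ ^ 2) = -((p : ℂ) * jacobiSum (χ ^ 2) (χ ^ 2)) := by linear_combination gaussS p (χ ^ 0) * gaussS p (χ ^ 2) * hM21 + jacobiSum (χ ^ 2) (χ ^ 2) * gaussS p (χ ^ 0) * hP32 + (p : ℂ) * jacobiSum (χ ^ 2) (χ ^ 2) * hB0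
  have hT344 : gaussS p (χ ^ 1) * gaussS p (χ ^ 2) * gaussS p (χ ^ 1) * gaussS p (χ ^ 1) = (p : ℂ) * jacobiSum (χ ^ 2) (χ ^ 2) * jacobiSum (χ ^ 1) (χ ^ 1) := by linear_combination gaussS p (χ ^ 1) * gaussS p (χ ^ 1) * hM21 + gaussS p (χ ^ 1) * jacobiSum (χ ^ 2) (χ ^ 2) * hM31 + jacobiSum (χ ^ 2) (χ ^ 2) * jacobiSum (χ ^ 1) (χ ^ 1) * hP14
  have hT400 : gaussS p (χ ^ 4) * gaussS p (χ ^ 1) * gaussS p (χ ^ 0) * gaussS p (χ ^ 0) = (p : ℂ) := by linear_combination gaussS p (χ ^ 0) ^ 2 * hP41 + (p : ℂ) * (gaussS p (χ ^ 0) - 1) * hB0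
  have hT401 : gaussS p (χ ^ 0) * gaussS p (χ ^ 1) * gaussS p (χ ^ 0) * gaussS p (χ ^ 4) = (p : ℂ) := by linear_combination gaussS p (χ ^ 0) ^ 2 * hP14 + (p : ℂ) * (gaussS p (χ ^ 0) - 1) * hB0
  have hT402 : gaussS p (χ ^ 1) * gaussS p (χ ^ 1) * gaussS p (χ ^ 0) * gaussS p (χ ^ 3) = -((p : ℂ) * jacobiSum (χ ^ 1) (χ ^ 1)) := by linear_combination gaussS p (χ ^ 1) * gaussS p (χ ^ 0) * hM13 + jacobiSum (χ ^ 1) (χ ^ 1) * gaussS p (χ ^ 0) * hP14 + (p : ℂ) * jacobiSum (χ ^ 1) (χ ^ 1) * hB0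
  have hT403 : gaussS p (χ ^ 2) * gaussS p (χ ^ 1) * gaussS p (χ ^ 0) * gaussS p (χ ^ 2) = -((p : ℂ) * jacobiSum (χ ^ 2) (χ ^ 2)) := by linear_combination gaussS p (χ ^ 2) * gaussS p (χ ^ 0) * hM12 + jacobiSum (χ ^ 2) (χ ^ 2) * gaussS p (χ ^ 0) * hP23 + (p : ℂ) * jacobiSum (χ ^ 2) (χ ^ 2) * hB0
  have hT404 : gaussS p (χ ^ 3) * gaussS p (χ ^ 1) * gaussS p (χ ^ 0) * gaussS p (χ ^ 1) = -((p : ℂ) * jacobiSum (χ ^ 1) (χ ^ 1)) := by linear_combination gaussS p (χ ^ 3) * gaussS p (χ ^ 0) * hM11 + jacobiSum (χ ^ 1) (χ ^ 1) * gaussS p (χ ^ 0) * hP32 + (p : ℂ) * jacobiSum (χ ^ 1) (χ ^ 1) * hB0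
  have hT410 : gaussS p (χ ^ 0) * gaussS p (χ ^ 1) * gaussS p (χ ^ 4) * gaussS p (χ ^ 0) = (p : ℂ) := by linear_combination gaussS p (χ ^ 0) ^ 2 * hP14 + (p : ℂ) * (gaussS p (χ ^ 0) - 1) * hB0
  have hT411 : gaussS p (χ ^ 1) * gaussS p (χ ^ 1) * gaussS p (χ ^ 4) * gaussS p (χ ^ 4) = (p : ℂ) * (p : ℂ) := by linear_combination gaussS p (χ ^ 1) * gaussS p (χ ^ 4) * hP14 + (p : ℂ) * hP14
  have hT412 : gaussS p (χ ^ 2) * gaussS p (χ ^ 1) * gaussS p (χ ^ 4) * gaussS p (χ ^ 3) = (p : ℂ) * (p : ℂ) := by linear_combination gaussS p (χ ^ 2) * gaussS p (χ ^ 3) * hP14 + (p : ℂ) * hP23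
  have hT413 : gaussS p (χ ^ 3) * gaussS p (χ ^ 1) * gaussS p (χ ^ 4) * gaussS p (χ ^ 2) = (p : ℂ) * (p : ℂ) := by linear_combination gaussS p (χ ^ 3) * gaussS p (χ ^ 2) * hP14 + (p : ℂ) * hP32
  have hT414 : gaussS p (χ ^ 4) * gaussS p (χ ^ 1) * gaussS p (χ ^ 4) * gaussS p (χ ^ 1) = (p : ℂ) * (p : ℂ) := by linear_combination gaussS p (χ ^ 4) * gaussS p (χ ^ 1) * hP14 + (p : ℂ) * hP41
  have hT420 : gaussS p (χ ^ 1) * gaussS p (χ ^ 1) * gaussS p (χ ^ 3) * gaussS p (χ ^ 0) = -((p : ℂ) * jacobiSum (χ ^ 1) (χ ^ 1)) := by linear_combination gaussS p (χ ^ 1) * gaussS p (χ ^ 0) * hM13 + jacobiSum (χ ^ 1) (χ ^ 1) * gaussS p (χ ^ 0) * hP14 + (p : ℂ) * jacobiSum (χ ^ 1) (χ ^ 1) * hB0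
  have hT421 : gaussS p (χ ^ 2) * gaussS p (χ ^ 1) * gaussS p (χ ^ 3) * gaussS p (χ ^ 4) = (p : ℂ) * jacobiSum (χ ^ 1) (χ ^ 1) * jacobiSum (χ ^ 4) (χ ^ 4) := by linear_combination gaussS p (χ ^ 2) * gaussS p (χ ^ 4) * hM13 + gaussS p (χ ^ 2) * jacobiSum (χ ^ 1) (χ ^ 1) * hM44 + jacobiSum (χ ^ 1) (χ ^ 1) * jacobiSum (χ ^ 4) (χ ^ 4) * hP23
  have hT422 : gaussS p (χ ^ 3) * gaussS p (χ ^ 1) * gaussS p (χ ^ 3) * gaussS p (χ ^ 3) = (p : ℂ) * jacobiSum (χ ^ 1) (χ ^ 1) * jacobiSum (χ ^ 3) (χ ^ 3) := by linear_combination gaussS p (χ ^ 3) * gaussS p (χ ^ 3) * hM13 + gaussS p (χ ^ 3) * jacobiSum (χ ^ 1) (χ ^ 1) * hM43 + jacobiSum (χ ^ 1) (χ ^ 1) * jacobiSum (χ ^ 3) (χ ^ 3) * hP32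
  have hT423 : gaussS p (χ ^ 4) * gaussS p (χ ^ 1) * gaussS p (χ ^ 3) * gaussS p (χ ^ 2) = (p : ℂ) * jacobiSum (χ ^ 1) (χ ^ 1) * jacobiSum (χ ^ 4) (χ ^ 4) := by linear_combination gaussS p (χ ^ 4) * gaussS p (χ ^ 2) * hM13 + gaussS p (χ ^ 4) * jacobiSum (χ ^ 1) (χ ^ 1) * hM42 + jacobiSum (χ ^ 1) (χ ^ 1) * jacobiSum (χ ^ 4) (χ ^ 4) * hP41
  have hT424 : gaussS p (χ ^ 0) * gaussS p (χ ^ 1) * gaussS p (χ ^ 3) * gaussS p (χ ^ 1) = -((p : ℂ) * jacobiSum (χ ^ 1) (χ ^ 1)) := by linear_combination gaussS p (χ ^ 0) * gaussS p (χ ^ 1) * hM13 + jacobiSum (χ ^ 1) (χ ^ 1) * gaussS p (χ ^ 0) * hP41 + (p : ℂ) * jacobiSum (χ ^ 1) (χ ^ 1) * hB0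
  have hT430 : gaussS p (χ ^ 2) * gaussS p (χ ^ 1) * gaussS p (χ ^ 2) * gaussS p (χ ^ 0) = -((p : ℂ) * jacobiSum (χ ^ 2) (χ ^ 2)) := by linear_combination gaussS p (χ ^ 2) * gaussS p (χ ^ 0) * hM12 + jacobiSum (χ ^ 2) (χ ^ 2) * gaussS p (χ ^ 0) * hP23 + (p : ℂ) * jacobiSum (χ ^ 2) (χ ^ 2) * hB0
  have hT431 : gaussS p (χ ^ 3) * gaussS p (χ ^ 1) * gaussS p (χ ^ 2) * gaussS p (χ ^ 4) = (p : ℂ) * jacobiSum (χ ^ 2) (χ ^ 2) * jacobiSum (χ ^ 3) (χ ^ 3) := by linear_combination gaussS p (χ ^ 3) * gaussS p (χ ^ 4) * hM12 + gaussS p (χ ^ 3) * jacobiSum (χ ^ 2) (χ ^ 2) * hM34 + jacobiSum (χ ^ 2) (χ ^ 2) * jacobiSum (χ ^ 3) (χ ^ 3) * hP32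
  have hT432 : gaussS p (χ ^ 4) * gaussS p (χ ^ 1) * gaussS p (χ ^ 2) * gaussS p (χ ^ 3) = (p : ℂ) * jacobiSum (χ ^ 2) (χ ^ 2) * jacobiSum (χ ^ 3) (χ ^ 3) := by linear_combination gaussS p (χ ^ 4) * gaussS p (χ ^ 3) * hM12 + gaussS p (χ ^ 4) * jacobiSum (χ ^ 2) (χ ^ 2) * hM33 + jacobiSum (χ ^ 2) (χ ^ 2) * jacobiSum (χ ^ 3) (χ ^ 3) * hP41
  have hT433 : gaussS p (χ ^ 0) * gaussS p (χ ^ 1) * gaussS p (χ ^ 2) * gaussS p (χ ^ 2) = -((p : ℂ) * jacobiSum (χ ^ 2) (χ ^ 2)) := by linear_combination gaussS p (χ ^ 0) * gaussS p (χ ^ 2) * hM12 + jacobiSum (χ ^ 2) (χ ^ 2) * gaussS p (χ ^ 0) * hP32 + (p : ℂ) * jacobiSum (χ ^ 2) (χ ^ 2) * hB0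
  have hT434 : gaussS p (χ ^ 1) * gaussS p (χ ^ 1) * gaussS p (χ ^ 2) * gaussS p (χ ^ 1) = (p : ℂ) * jacobiSum (χ ^ 2) (χ ^ 2) * jacobiSum (χ ^ 1) (χ ^ 1) := by linear_combination gaussS p (χ ^ 1) * gaussS p (χ ^ 1) * hM12 + gaussS p (χ ^ 1) * jacobiSum (χ ^ 2) (χ ^ 2) * hM31 + jacobiSum (χ ^ 2) (χ ^ 2) * jacobiSum (χ ^ 1) (χ ^ 1) * hP14
  have hT440 : gaussS p (χ ^ 3) * gaussS p (χ ^ 1) * gaussS p (χ ^ 1) * gaussS p (χ ^ 0) = -((p : ℂ) * jacobiSum (χ ^ 1) (χ ^ 1)) := by linear_combination gaussS p (χ ^ 3) * gaussS p (χ ^ 0) * hM11 + jacobiSum (χ ^ 1) (χ ^ 1) * gaussS p (χ ^ 0) * hP32 + (p : ℂ) * jacobiSum (χ ^ 1) (χ ^ 1) * hB0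
  have hT441 : gaussS p (χ ^ 4) * gaussS p (χ ^ 1) * gaussS p (χ ^ 1) * gaussS p (χ ^ 4) = (p : ℂ) * jacobiSum (χ ^ 1) (χ ^ 1) * jacobiSum (χ ^ 4) (χ ^ 4) := by linear_combination gaussS p (χ ^ 4) * gaussS p (χ ^ 4) * hM11 + gaussS p (χ ^ 4) * jacobiSum (χ ^ 1) (χ ^ 1) * hM24 + jacobiSum (χ ^ 1) (χ ^ 1) * jacobiSum (χ ^ 4) (χ ^ 4) * hP41
  have hT442 : gaussS p (χ ^ 0) * gaussS p (χ ^ 1) * gaussS p (χ ^ 1) * gaussS p (χ ^ 3) = -((p : ℂ) * jacobiSum (χ ^ 1) (χ ^ 1)) := by linear_combination gaussS p (χ ^ 0) * gaussS p (χ ^ 3) * hM11 + jacobiSum (χ ^ 1) (χ ^ 1) * gaussS p (χ ^ 0) * hP23 + (p : ℂ) * jacobiSum (χ ^ 1) (χ ^ 1) * hB0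
  have hT443 : gaussS p (χ ^ 1) * gaussS p (χ ^ 1) * gaussS p (χ ^ 1) * gaussS p (χ ^ 2) = (p : ℂ) * jacobiSum (χ ^ 1) (χ ^ 1) * jacobiSum (χ ^ 2) (χ ^ 2) := by linear_combination gaussS p (χ ^ 1) * gaussS p (χ ^ 2) * hM11 + gaussS p (χ ^ 1) * jacobiSum (χ ^ 1) (χ ^ 1) * hM22 + jacobiSum (χ ^ 1) (χ ^ 1) * jacobiSum (χ ^ 2) (χ ^ 2) * hP14
  have hT444 : gaussS p (χ ^ 2) * gaussS p (χ ^ 1) * gaussS p (χ ^ 1) * gaussS p (χ ^ 1) = (p : ℂ) * jacobiSum (χ ^ 1) (χ ^ 1) * jacobiSum (χ ^ 2) (χ ^ 2) := by linear_combination gaussS p (χ ^ 2) * gaussS p (χ ^ 1) * hM11 + gaussS p (χ ^ 2) * jacobiSum (χ ^ 1) (χ ^ 1) * hM21 + jacobiSum (χ ^ 1) (χ ^ 1) * jacobiSum (χ ^ 2) (χ ^ 2) * hP23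
  have hsum5 : ∀ f : ℕ → ℂ, (∑ k ∈ Finset.range 5, f k) = f 0 + f 1 + f 2 + f 3 + f 4 := by
    intro f
    rw [Finset.sum_range_succ, Finset.sum_range_succ, Finset.sum_range_succ,
      Finset.sum_range_succ, Finset.sum_range_one]
  have hsum4 : ∀ f : ℕ → ℂ, (∑ k ∈ Finset.Icc (1 : ℕ) 4, f k) = f 1 + f 2 + f 3 + f 4 := by
    intro f
    rw [show Finset.Icc (1 : ℕ) 4 = {1, 2, 3, 4} from by decide]
    rw [Finset.sum_insert (by decide), Finset.sum_insert (by decide),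
      Finset.sum_insert (by decide), Finset.sum_singleton]
    ring
  simp only [hsum5, hsum4]
  simp only [Nat.reduceAdd, Nat.reduceMod, Nat.reduceSub, Nat.reduceMul]
  linear_combination hT000 + hT001 + hT002 + hT003 + hT004 + hT010 + hT011 + hT012 + hT013 + hT014 + hT020 + hT021 + hT022 + hT023 + hT024 + hT030 + hT031 + hT032 + hT033 + hT034 + hT040 + hT041 + hT042 + hT043 + hT044 + hT100 + hT101 + hT102 + hT103 + hT104 + hT110 + hT111 + hT112 + hT113 + hT114 + hT120 + hT121 + hT122 + hT123 + hT124 + hT130 + hT131 + hT132 + hT133 + hT134 + hT140 + hT141 + hT142 + hT143 + hT144 + hT200 + hT201 + hT202 + hT203 + hT204 + hT210 + hT211 + hT212 + hT213 + hT214 + hT220 + hT221 + hT222 + hT223 + hT224 + hT230 + hT231 + hT232 + hT233 + hT234 + hT240 + hT241 + hT242 + hT243 + hT244 + hT300 + hT301 + hT302 + hT303 + hT304 + hT310 + hT311 + hT312 + hT313 + hT314 + hT320 + hT321 + hT322 + hT323 + hT324 + hT330 + hT331 + hT332 + hT333 + hT334 + hT340 + hT341 + hT342 + hT343 + hT344 +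 hT400 + hT401 + hT402 + hT403 + hT404 + hT410 + hT411 + hT412 + hT413 + hT414 + hT420 + hT421 + hT422 + hT423 + hT424 + hT430 + hT431 + hT432 + hT433 + hT434 + hT440 + hT441 + hT442 + hT443 + hT444 - 12 * (p : ℂ) * (hRa1 + hRa2 + hRa3 + hRa4) - 4 * (p : ℂ) * (hRb1 + hRb2 + hRb3 + hRb4) + 10 * (p : ℂ) * hC1 + 10 * (p : ℂ) * hC2
/-- Evaluation of the triple Gauss-sum sum `C` (proof of Theorem 5.1 of McCarthy). -/
theorem gauss_triple_sum (p : ℕ) [Fact p.Prime] (hp : p % 5 = 1)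
    (t : ℕ) (ht : t = (p - 1) / 5)
    (T : MulChar (ZMod p) ℂ) (hT : ∀ χ : MulChar (ZMod p) ℂ, ∃ n : ℕ, χ = T ^ n) :
    ∑ i ∈ Finset.range 5, ∑ j ∈ Finset.range 5, ∑ k ∈ Finset.range 5,
      gaussS p (T ^ ((i + j + k) * t)) * gaussS p (T ^ (-(i : ℤ) * t)) *
        gaussS p (T ^ (-(j : ℤ) * t)) * gaussS p (T ^ (-(k : ℤ) * t)) =
    1 + 36 * (p : ℂ) ^ 2 + 24 * (p : ℂ) +
      12 * (p : ℂ) * (∑ k ∈ Finset.Icc (1 : ℕ) 4,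
        jacobi3 p (T ^ (k * t)) (T ^ (2 * k * t)) (T ^ (2 * k * t))) +
      4 * (p : ℂ) * ∑ k ∈ Finset.Icc (1 : ℕ) 4,
        jacobi3 p (T ^ (k * t)) (T ^ (k * t)) (T ^ (k * t)) := by
  have hpp : p.Prime := Fact.out
  have hp2 : 2 ≤ p := hpp.two_le
  have h5t : 5 * t = p - 1 := by omega
  have hTord : orderOf T = p - 1 := by
    have hdvd : orderOf T ∣ p - 1 := by
      have := MulChar.orderOf_dvd_card_sub_one (F := ZMod p) T
      rwa [ZMod.card] at this
    have hne : (p - 1 : ℕ) ≠ 0 := by omega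
    obtain ⟨ξ, hξ⟩ := MulChar.exists_mulChar_orderOf (ZMod p) (n := p - 1)
      (by rw [ZMod.card]) (Complex.isPrimitiveRoot_exp (p - 1) hne)
    obtain ⟨n, hn⟩ := hT ξ
    have hdvd2 : (p - 1 : ℕ) ∣ orderOf T := by
      rw [← hξ, hn]
      apply orderOf_dvd_of_pow_eq_one
      rw [← pow_mul, mul_comm, pow_mul, pow_orderOf_eq_one, one_pow]
    exact Nat.dvd_antisymm hdvd hdvd2
  have hfin : IsOfFinOrder T := by
    rw [← orderOf_pos_iff, hTord]; omega
  have ht0 : t ≠ 0 := by omega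
  have hord : orderOf (T ^ t) = 5 := by
    rw [hfin.orderOf_pow, hTord, ← h5t, Nat.gcd_eq_right (dvd_mul_left t 5),
      Nat.mul_div_cancel _ (by omega)]
  have h5one : (T ^ t) ^ 5 = 1 := chi_pow5 hord
  have hTpow : ∀ m : ℕ, T ^ (m * t) = (T ^ t) ^ (m % 5) := by
    intro m
    rw [mul_comm m t, pow_mul]
    exact chi_mod hord m
  have hTzpow : ∀ m : ℕ, T ^ (-(m : ℤ) * (t : ℤ)) = (T ^ t) ^ ((5 - m % 5) % 5) := by
    intro m
    have h1 : (-(m : ℤ) * (t : ℤ)) = -((m * t : ℕ) : ℤ) := by push_cast; ring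
    rw [h1, zpow_neg, zpow_natCast, hTpow m]
    exact chi_inv_pow hord (by omega)
  simp only [hTpow, hTzpow]
  exact gauss_aux p (T ^ t) hord
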